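/- Path-quantifier elimination is sound and complete: for a system model M with n elements, there exists a path π in M from element e to element e' (acyclic, of length k ≤ n-1 connectors) if and only if there exist connectors c₁,...,c_k ∈ C with src(c₁) = e, tgt(c_k) = e', tgt(c_{i-1}) = src(c_i) for 1 < i ≤ k, and tgt(c_i) ≠ src(c_j) for all 1 ≤ j ≤ i ≤ k. -/

import Mathlib

/-- The element sequence of a path encoded by its connectors:
`src c₀, tgt c₀, tgt c₁, ..., tgt c_k`. -/
def elemSeq {C E : Type*} (src tgt : C → E) {k : ℕ} (c : Fin (k + 1) → C) :
    Fin (k + 2) → E :=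
  fun i => Fin.cases (src (c 0)) (fun j => tgt (c j)) i

/-! Along a chained connector sequence `src cⱼ = tgt cⱼ₋₁`, so position `j` of the element
sequence is `src cⱼ` and position `i + 1` is `tgt cᵢ`. The pairs of positions `a < b` are
exactly the pairs `(j, i + 1)` with `j ≤ i`, so distinctness of the elements is the side
condition `tgt cᵢ ≠ src cⱼ`; and `k + 2` distinct elements fit in `E` only if `k + 2 ≤ n`. -/

theorem Fin.forall_lt_iff_forall_castSucc_succ {n : ℕ} {P : Fin (n + 2) → Fin (n + 2) → Prop} :
    (∀ a b, a < b → P a b) ↔ ∀ i j : Fin (n + 1), j ≤ i → P j.castSucc i.succ := by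
  refine ⟨fun h i j hji => h _ _ (Fin.castSucc_lt_succ_iff.mpr hji), fun h a b hab => ?_⟩
  obtain ⟨i, rfl⟩ := Fin.exists_succ_eq.mpr (Fin.ne_zero_of_lt hab)
  obtain ⟨j, rfl⟩ := Fin.exists_castSucc_eq.mpr (Fin.ne_last_of_lt hab)
  exact h i j (Fin.castSucc_lt_succ_iff.mp hab)

theorem Function.injective_iff_forall_lt_ne {α β : Type*} [LinearOrder α] {f : α → β} :
    Function.Injective f ↔ ∀ a b, a < b → f a ≠ f b := by
  rw [Function.injective_iff_pairwise_ne, pairwise_iff_lt]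

section ConnectorPath

variable {C E : Type*} (src tgt : C → E) {k : ℕ} (c : Fin (k + 1) → C)

@[simp]
theorem elemSeq_succ (j : Fin (k + 1)) : elemSeq src tgt c j.succ = tgt (c j) := rfl

variable {src tgt c}

theorem elemSeq_castSucc_of_chain (hchain : ∀ i : Fin k, tgt (c i.castSucc) = src (c i.succ))
    (j : Fin (k + 1)) : elemSeq src tgt c j.castSucc = src (c j) := by
  induction j using Fin.cases with
  | zero => rfl
  | succ i => rw [← Fin.succ_castSucc, elemSeq_succ, hchain]

theorem injective_elemSeq_iff (hchain : ∀ i : Fin k, tgt (c i.castSucc) = src (c i.succ)) :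
    Function.Injective (elemSeq src tgt c) ↔
      ∀ i j : Fin (k + 1), j ≤ i → tgt (c i) ≠ src (c j) := by
  simp only [Function.injective_iff_forall_lt_ne, Fin.forall_lt_iff_forall_castSucc_succ,
    elemSeq_castSucc_of_chain hchain, elemSeq_succ, ne_comm]

theorem add_two_le_card_of_injective_elemSeq [Fintype E]
    (hinj : Function.Injective (elemSeq src tgt c)) : k + 2 ≤ Fintype.card E := by
  simpa using Fintype.card_le_of_injective _ hinj

end ConnectorPath

/-- Path-quantifier elimination is sound and complete: there is an acyclic
path from `e` to `e'` iff there is a chained connector sequence of length at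
most `n - 1` satisfying the inequality side conditions (3) and (4) of the
translation `T(∃p.φ)`. -/
theorem stmt13 {C E : Type*} [Fintype E] (src tgt : C → E) (e e' : E) :
    (∃ (k : ℕ) (c : Fin (k + 1) → C),
        (∀ i : Fin k, tgt (c i.castSucc) = src (c i.succ)) ∧
        Function.Injective (elemSeq src tgt c) ∧
        src (c 0) = e ∧ tgt (c (Fin.last k)) = e')
    ↔ (∃ (k : ℕ) (c : Fin (k + 1) → C),
        k + 1 ≤ Fintype.card E - 1 ∧
        (∀ i : Fin k, tgt (c i.castSucc) = src (c i.succ)) ∧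
        (∀ i j : Fin (k + 1), j ≤ i → tgt (c i) ≠ src (c j)) ∧
        src (c 0) = e ∧ tgt (c (Fin.last k)) = e') := by
  constructor
  · rintro ⟨k, c, hchain, hinj, h0, hlast⟩
    have hcard := add_two_le_card_of_injective_elemSeq hinj
    exact ⟨k, c, by omega, hchain, (injective_elemSeq_iff hchain).mp hinj, h0, hlast⟩
  · rintro ⟨k, c, -, hchain, hside, h0, hlast⟩
    exact ⟨k, c, hchain, (injective_elemSeq_iff hchain).mpr hside, h0, hlast⟩
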